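/- arXiv:1709.07974 — 2 statements merged into one kernel-verified Lean document; each statement's English description precedes it below -/
import Mathlib

section
/- Let α > 2, T > 0, σ² > 0, λ > 0, β > 1 and ε ∈ (0,1) satisfy 1 − ε < 1/β, and let Γ denote the Gamma function. Define P(p) = (β + (α/(2πλ)) (Tσ²/p)^{2/α}/Γ(2/α))^{-1} for p > 0, and c₀ = [2π(1−(1−ε)β)Γ(2/α) / (α(1−ε)(Tσ²)^{2/α})]^{−α/2}. Then c₀ > 0 and, for every p > 0, P(p) ≥ 1 − ε if and only if p ≥ c₀ λ^{−α/2}. -/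
/-- Proposition 7: with `P(p) = (β + (α/(2πλ))(Tσ²/p)^{2/α}/Γ(2/α))⁻¹` and
`c₀ = [2π(1−(1−ε)β)Γ(2/α)/(α(1−ε)(Tσ²)^{2/α})]^{−α/2}`, we have `c₀ > 0` and
`P(p) ≥ 1 − ε ↔ p ≥ c₀ λ^{−α/2}` for every `p > 0`. -/
theorem stmt_5 (α T σ2 lam β ε : ℝ) (hα : 2 < α) (hT : 0 < T) (hσ2 : 0 < σ2)
    (hlam : 0 < lam) (hβ : 1 < β) (hε0 : 0 < ε) (hε1 : ε < 1)
    (hQoS : 1 - ε < 1 / β) :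
    0 < (2 * Real.pi * (1 - (1 - ε) * β) * Real.Gamma (2 / α) /
          (α * (1 - ε) * (T * σ2) ^ (2 / α))) ^ (-(α / 2)) ∧
    ∀ p : ℝ, 0 < p →
      ((β + α / (2 * Real.pi * lam) * ((T * σ2 / p) ^ (2 / α) / Real.Gamma (2 / α)))⁻¹
          ≥ 1 - ε ↔
        p ≥ (2 * Real.pi * (1 - (1 - ε) * β) * Real.Gamma (2 / α) /
              (α * (1 - ε) * (T * σ2) ^ (2 / α))) ^ (-(α / 2)) * lam ^ (-(α / 2))) := by
  have hα0 : (0:ℝ) < α := by linarith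
  have hβ0 : (0:ℝ) < β := by linarith
  have h1ε : (0:ℝ) < 1 - ε := by linarith
  have hnum : 0 < 1 - (1 - ε) * β := by
    have := (lt_div_iff₀ hβ0).mp hQoS
    linarith
  have hG : 0 < Real.Gamma (2 / α) := Real.Gamma_pos_of_pos (by positivity)
  have hA : 0 < T * σ2 := mul_pos hT hσ2
  set c : ℝ := 2 * Real.pi * (1 - (1 - ε) * β) * Real.Gamma (2 / α) /
      (α * (1 - ε) * (T * σ2) ^ (2 / α)) with hc
  have hπ := Real.pi_pos
  have hc0 : 0 < c := by
    apply div_pos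
    · positivity
    · positivity
  have hc₀ : 0 < c ^ (-(α / 2)) := Real.rpow_pos_of_pos hc0 _
  refine ⟨hc₀, fun p hp => ?_⟩
  -- rewrite RHS as (c*lam)^(-(α/2))
  have hRHS : c ^ (-(α / 2)) * lam ^ (-(α / 2)) = (c * lam) ^ (-(α / 2)) :=
    (Real.mul_rpow hc0.le hlam.le).symm
  rw [hRHS]
  have hclam : 0 < c * lam := mul_pos hc0 hlam
  -- key : p ≥ (c*lam)^(-(α/2)) ↔ p^(-(2/α)) ≤ c * lam
  have hkey : p ≥ (c * lam) ^ (-(α / 2)) ↔ p ^ (-(2 / α)) ≤ c * lam := by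
    rw [ge_iff_le, ← Real.rpow_le_rpow_iff_of_neg hp (Real.rpow_pos_of_pos hclam _)
      (by simp; positivity : -(2 / α) < 0), ← Real.rpow_mul hclam.le,
      show -(α / 2) * -(2 / α) = 1 by field_simp, Real.rpow_one]
  rw [hkey]
  -- now handle LHS
  have hM : α / (2 * Real.pi * lam) * ((T * σ2 / p) ^ (2 / α) / Real.Gamma (2 / α))
      = α / (2 * Real.pi * lam) * ((T * σ2) ^ (2 / α) / Real.Gamma (2 / α)) * p ^ (-(2 / α)) := by
    rw [Real.div_rpow hA.le hp.le, Real.rpow_neg hp.le]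
    ring
  set M : ℝ := α / (2 * Real.pi * lam) * ((T * σ2) ^ (2 / α) / Real.Gamma (2 / α)) with hMdef
  have hMpos : 0 < M := by positivity
  rw [hM]
  have hD : 0 < β + M * p ^ (-(2 / α)) := by positivity
  constructor
  · intro h
    have h2 : (1 - ε) * (β + M * p ^ (-(2 / α))) ≤ 1 := by
      have := (le_inv_comm₀ h1ε hD).mp h
      rw [← one_div, le_div_iff₀ h1ε] at this
      nlinarith
    -- (1-ε) * M * p^(-(2/α)) ≤ 1 - (1-ε)β  ⇒ p^(-(2/α)) ≤ (1-(1-ε)β)/((1-ε)M) = c*lam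
    have h3 : p ^ (-(2 / α)) ≤ (1 - (1 - ε) * β) / ((1 - ε) * M) := by
      rw [le_div_iff₀ (by positivity)]
      nlinarith
    have hcl : (1 - (1 - ε) * β) / ((1 - ε) * M) = c * lam := by
      rw [hMdef, hc]
      field_simp
    linarith [hcl ▸ h3]
  · intro h
    have hcl : c * lam = (1 - (1 - ε) * β) / ((1 - ε) * M) := by
      rw [hMdef, hc]
      field_simp
    rw [hcl, le_div_iff₀ (by positivity)] at h
    rw [ge_iff_le, le_inv_comm₀ h1ε hD, ← one_div, le_div_iff₀ h1ε]
    nlinarith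
end

section
/- Let α > 2, c > 0, p_c > 0 and p_max > 0, set λ_th = (c/p_max)^{2/α}, and define S(λ) = λ(c λ^{−α/2} + p_c) for λ > 0. Then S restricted to the interval [λ_th, ∞) attains its minimum at λ_min = max(λ_th, [ (c/p_c)(α/2 − 1) ]^{2/α}), i.e. S(λ_min) ≤ S(λ) for every λ ≥ λ_th. -/
/-!
Writing `S(λ) = λ (c λ^{-e} + p)` with `e = α/2 > 1`, one has `S'(λ) = p - c (e - 1) λ^{-e}`,
which increases in `λ` and vanishes exactly at `λ* = (c/p (e - 1))^{1/e}`. So `S` decreases up to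
`λ*` and increases after it, and its minimum over `[λ_th, ∞)` sits at `max(λ_th, λ*)`.
-/

open Real Set

theorem apply_max_le_of_antitoneOn_of_monotoneOn {α β : Type*} [LinearOrder α] [Preorder β]
    {f : α → β} {a m x : α} (hanti : AntitoneOn f (Icc a m)) (hmono : MonotoneOn f (Ici m))
    (hx : a ≤ x) : f (max a m) ≤ f x := by
  rcases le_total a m with ham | hma
  · rw [max_eq_right ham]
    rcases le_total x m with hxm | hmx
    · exact hanti ⟨hx, hxm⟩ ⟨ham, le_rfl⟩ hxm
    · exact hmono self_mem_Ici hmx hmx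
  · rw [max_eq_left hma]
    exact hmono hma (hma.trans hx) hx

/-- The paper's `S(λ)` with `e = α/2` and `p = p_c`. -/
noncomputable def arealPower (c p e x : ℝ) : ℝ := x * (c * x ^ (-e) + p)

namespace arealPower

variable {c p e m : ℝ}

theorem hasDerivAt {x : ℝ} (hx : 0 < x) :
    HasDerivAt (arealPower c p e) (p - c * (e - 1) * x ^ (-e)) x := by
  have hpow : HasDerivAt (fun x : ℝ => x ^ (-e)) (-e * x ^ (-e - 1)) x :=
    hasDerivAt_rpow_const (Or.inl hx.ne')
  refine ((hasDerivAt_id' x).mul ((hpow.const_mul c).add_const p)).congr_deriv ?_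
  have hsplit : x * x ^ (-e - 1) = x ^ (-e) := by
    rw [mul_comm, ← rpow_add_one hx.ne', sub_add_cancel]
  linear_combination (-c * e) * hsplit

theorem continuousOn {s : Set ℝ} (hs : s ⊆ Ioi 0) : ContinuousOn (arealPower c p e) s :=
  fun _ hx => (hasDerivAt (hs hx)).continuousAt.continuousWithinAt

theorem monotoneOn_Ici (hce : 0 ≤ c * (e - 1)) (he : 0 ≤ e) (hm : 0 < m)
    (hcrit : c * (e - 1) * m ^ (-e) = p) : MonotoneOn (arealPower c p e) (Ici m) := by
  refine monotoneOn_of_hasDerivWithinAt_nonneg (convex_Ici m)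
    (f' := fun x => p - c * (e - 1) * x ^ (-e))
    (continuousOn fun _ hx => hm.trans_le hx) (fun x hx => ?_) (fun x hx => ?_)
  all_goals rw [interior_Ici] at hx
  · exact (hasDerivAt (hm.trans hx)).hasDerivWithinAt
  · have hle : x ^ (-e) ≤ m ^ (-e) := rpow_le_rpow_of_nonpos hm hx.le (neg_nonpos.2 he)
    nlinarith [mul_le_mul_of_nonneg_left hle hce]

theorem antitoneOn_Ioc (hce : 0 ≤ c * (e - 1)) (he : 0 ≤ e)
    (hcrit : c * (e - 1) * m ^ (-e) = p) : AntitoneOn (arealPower c p e) (Ioc 0 m) := by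
  refine antitoneOn_of_hasDerivWithinAt_nonpos (convex_Ioc 0 m)
    (f' := fun x => p - c * (e - 1) * x ^ (-e))
    (continuousOn fun _ hx => hx.1) (fun x hx => ?_) (fun x hx => ?_)
  all_goals rw [interior_Ioc] at hx
  · exact (hasDerivAt hx.1).hasDerivWithinAt
  · have hle : m ^ (-e) ≤ x ^ (-e) := rpow_le_rpow_of_nonpos hx.1 hx.2.le (neg_nonpos.2 he)
    nlinarith [mul_le_mul_of_nonneg_left hle hce]

theorem mul_rpow_neg_critical (hc : 0 < c) (hp : 0 < p) (he : 1 < e) :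
    c * (e - 1) * ((c / p * (e - 1)) ^ e⁻¹) ^ (-e) = p := by
  have he' := sub_pos.2 he
  rw [rpow_neg (by positivity), rpow_inv_rpow (by positivity) (by linarith)]
  field_simp

end arealPower

/-- Proposition 10: on the region `λ ≥ λ_th = (c/p_max)^{2/α}`, the areal power
consumption `S(λ) = λ(c λ^{−α/2} + p_c)` is minimized at
`λ_min = max(λ_th, [(c/p_c)(α/2 − 1)]^{2/α})`. -/
theorem stmt_9 (α c pc pmax : ℝ) (hα : 2 < α) (hc : 0 < c) (hpc : 0 < pc)
    (hpmax : 0 < pmax) :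
    ∀ lam : ℝ, (c / pmax) ^ (2 / α) ≤ lam →
      (max ((c / pmax) ^ (2 / α)) ((c / pc * (α / 2 - 1)) ^ (2 / α))) *
          (c * (max ((c / pmax) ^ (2 / α)) ((c / pc * (α / 2 - 1)) ^ (2 / α)))
              ^ (-(α / 2)) + pc)
        ≤ lam * (c * lam ^ (-(α / 2)) + pc) := by
  intro lam hlam
  have he : 1 < α / 2 := by linarith
  have hce : 0 ≤ c * (α / 2 - 1) := by have := sub_pos.2 he; positivity
  have hth : 0 < (c / pmax) ^ (2 / α) := by positivity
  have hcrit := arealPower.mul_rpow_neg_critical hc hpc he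
  rw [inv_div] at hcrit
  have hanti := arealPower.antitoneOn_Ioc hce (by linarith) hcrit
  exact apply_max_le_of_antitoneOn_of_monotoneOn (f := arealPower c pc (α / 2))
    (hanti.mono fun x hx => ⟨hth.trans_le hx.1, hx.2⟩)
    (arealPower.monotoneOn_Ici hce (by linarith) (by positivity) hcrit) hlam
end
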